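/- arXiv:2205.03156 — 9 statements merged into one kernel-verified Lean document; each statement's English description precedes it below -/
import Mathlib

section
/- Suppose a metric space (X,d) admits an isometric embedding φ : T → X of a 0-hyperbolic metric space (T, d_T) (i.e., d(φ(a), φ(b)) = d_T(a,b) for all a, b ∈ T) such that every point of X is within distance δ of φ(T). Then (X,d) is 6δ-hyperbolic. -/
open Set

/-- Gromov product `(y|z)_x`. -/
noncomputable def gp {X : Type*} [MetricSpace X] (x y z : X) : ℝ :=
  (dist x y + dist x z - dist y z) / 2

/-- `δ`-hyperbolicity. -/
def IsDeltaHyp (X : Type*) [MetricSpace X] (δ : ℝ) : Prop :=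
  ∀ p x y z : X, gp p x z ≥ min (gp p x y) (gp p y z) - δ

/-- `γ` is a (constant-speed, unit-interval) geodesic from `x` to `y`. -/
def IsGeodesic {X : Type*} [MetricSpace X] (γ : ℝ → X) (x y : X) : Prop :=
  γ 0 = x ∧ γ 1 = y ∧
    ∀ s ∈ Icc (0:ℝ) 1, ∀ t ∈ Icc (0:ℝ) 1, dist (γ s) (γ t) = |s - t| * dist x y

/-- Geodesic space. -/
def GeodesicSpace (X : Type*) [MetricSpace X] : Prop :=
  ∀ x y : X, ∃ γ : ℝ → X, IsGeodesic γ x y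

/-- (Weak, geodesic) `K`-convexity. -/
def KConvex {X : Type*} [MetricSpace X] (K : ℝ) (f : X → ℝ) : Prop :=
  ∀ x y : X, ∃ γ : ℝ → X, IsGeodesic γ x y ∧
    ∀ t ∈ Icc (0:ℝ) 1,
      f (γ t) ≤ (1 - t) * f x + t * f y - K / 2 * (1 - t) * t * dist x y ^ 2

/-- `L`-Lipschitz continuity. -/
def LipschitzL {X : Type*} [MetricSpace X] (L : ℝ) (f : X → ℝ) : Prop :=
  ∀ x y : X, |f x - f y| ≤ L * dist x y

/-- `y` belongs to the proximal set `J^f_τ(x)`. -/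
def IsProx {X : Type*} [MetricSpace X] (f : X → ℝ) (τ : ℝ) (x y : X) : Prop :=
  ∀ z : X, f y + dist x y ^ 2 / (2 * τ) ≤ f z + dist x z ^ 2 / (2 * τ)

/-! Moving each of `p, x, z` by at most `δ` changes the Gromov product `(x|z)_p` by at most `3δ`.
Replacing the four points of a quadruple in `X` by nearby points of the tree therefore costs `3δ`
on each side of the tree's `0`-hyperbolicity inequality. -/

lemma Isometry.gp_eq {X T : Type*} [MetricSpace X] [MetricSpace T] {φ : T → X}
    (hφ : Isometry φ) (a b c : T) : gp (φ a) (φ b) (φ c) = gp a b c := by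
  simp only [gp, hφ.dist_eq]

lemma abs_gp_sub_gp_le {X : Type*} [MetricSpace X] {δ : ℝ} {p x z p' x' z' : X}
    (hp : dist p p' ≤ δ) (hx : dist x x' ≤ δ) (hz : dist z z' ≤ δ) :
    |gp p x z - gp p' x' z'| ≤ 3 * δ := by
  have hdist : ∀ {a b a' b' : X}, dist a a' ≤ δ → dist b b' ≤ δ →
      |dist a b - dist a' b'| ≤ 2 * δ := fun {a b a' b'} ha hb => by
    rw [← Real.dist_eq]
    linarith [dist_dist_dist_le a b a' b']
  have hpx := abs_le.1 (hdist hp hx)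
  have hpz := abs_le.1 (hdist hp hz)
  have hxz := abs_le.1 (hdist hx hz)
  rw [gp, gp, abs_le]
  constructor <;> linarith

theorem near_tree_hyperbolic_general {X T : Type*} [MetricSpace X] [MetricSpace T]
    {δ : ℝ} (hT : IsDeltaHyp T 0) (φ : T → X)
    (hiso : ∀ a b : T, dist (φ a) (φ b) = dist a b)
    (hcover : ∀ x : X, ∃ a : T, dist x (φ a) ≤ δ) :
    IsDeltaHyp X (6 * δ) := by
  intro p x y z
  obtain ⟨p', hp⟩ := hcover p
  obtain ⟨x', hx⟩ := hcover x
  obtain ⟨y', hy⟩ := hcover y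
  obtain ⟨z', hz⟩ := hcover z
  have hφ : Isometry φ := Isometry.of_dist_eq hiso
  have hxz := abs_le.1 (abs_gp_sub_gp_le hp hx hz)
  have hxy := abs_le.1 (abs_gp_sub_gp_le hp hx hy)
  have hyz := abs_le.1 (abs_gp_sub_gp_le hp hy hz)
  have htree := hT p' x' y' z'
  simp only [← hφ.gp_eq, sub_zero, ge_iff_le] at htree ⊢
  rcases min_le_iff.1 htree with h | h <;> linarith [min_le_left (gp p x y) (gp p y z),
    min_le_right (gp p x y) (gp p y z)]

theorem near_tree_hyperbolic {X T : Type*} [MetricSpace X] [MetricSpace T]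
    {δ : ℝ} (hδ : 0 ≤ δ) (hT : IsDeltaHyp T 0) (φ : T → X)
    (hiso : ∀ a b : T, dist (φ a) (φ b) = dist a b)
    (hcover : ∀ x : X, ∃ a : T, dist x (φ a) ≤ δ) :
    IsDeltaHyp X (6 * δ) :=
  near_tree_hyperbolic_general hT φ hiso hcover
end

section
/- Let (X,d) be a complete geodesic space and f : X → ℝ a lower semi-continuous K-convex function with K > 0 that is bounded below on some nonempty open set. Then inf_X f > −∞ and the infimum is attained at a unique point. -/
open Set

set_option maxHeartbeats 1600000 in
theorem kconvex_min_exists_unique {X : Type*} [MetricSpace X] [CompleteSpace X]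
    {K : ℝ} (hK : 0 < K) (hgeo : GeodesicSpace X) (f : X → ℝ)
    (hlsc : LowerSemicontinuous f) (hconv : KConvex K f)
    (hbdd : ∃ U : Set X, IsOpen U ∧ U.Nonempty ∧ BddBelow (f '' U)) :
    BddBelow (Set.range f) ∧ ∃! p : X, ∀ x : X, f p ≤ f x := by

  classical
  obtain ⟨U, hUopen, ⟨x₀, hx₀⟩, m, hm⟩ := hbdd
  obtain ⟨r, hr, hball⟩ := Metric.isOpen_iff.mp hUopen x₀ hx₀
  have hmU : ∀ z : X, dist x₀ z < r → m ≤ f z := by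
    intro z hz
    exact hm ⟨z, hball (by simpa [Metric.mem_ball, dist_comm] using hz), rfl⟩
  set C : ℝ := |m| + |f x₀| with hCdef
  have hC0 : 0 ≤ C := by positivity
  set Q : ℝ := 4 * C ^ 2 / (r ^ 2 * K) with hQdef
  have hQnn : 0 ≤ Q := by positivity
  have hQ : Q * (r ^ 2 * K) = 4 * C ^ 2 := by
    rw [hQdef]; field_simp
  -- global lower bound
  have hB : ∀ y : X, -2 * C - Q ≤ f y := by
    intro y
    set d : ℝ := dist x₀ y with hd
    have hd0 : 0 ≤ d := dist_nonneg
    set M : ℝ := max d r with hM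
    have hMr : r ≤ M := le_max_right _ _
    have hMd : d ≤ M := le_max_left _ _
    have hM0 : 0 < M := lt_of_lt_of_le hr hMr
    have hMdr : M ≤ d + r := max_le (by linarith) (by linarith)
    set t : ℝ := r / (2 * M) with ht
    have ht0 : 0 < t := by positivity
    have ht_eq : t * (2 * M) = r := by
      rw [ht]; field_simp
    have ht2 : t ≤ 1 / 2 := by
      rw [ht, div_le_div_iff₀ (by positivity) (by norm_num)]
      linarith
    have htIcc : t ∈ Icc (0:ℝ) 1 := ⟨ht0.le, by linarith⟩
    obtain ⟨γ, ⟨hγ0, hγ1, hγd⟩, hγconv⟩ := hconv x₀ y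
    have hkey := hγconv t htIcc
    have hdist : dist x₀ (γ t) = t * d := by
      have h0 : (0:ℝ) ∈ Icc (0:ℝ) 1 := ⟨le_refl _, by norm_num⟩
      have := hγd 0 h0 t htIcc
      rw [hγ0] at this
      rw [this, abs_of_nonpos (by linarith : (0:ℝ) - t ≤ 0)]
      ring
    have hnear : dist x₀ (γ t) < r := by
      rw [hdist]
      have h1 : t * d ≤ t * M := mul_le_mul_of_nonneg_left hMd ht0.le
      have h2 : t * (2 * M) = r := ht_eq
      nlinarith [mul_pos ht0 hM0]
    have hmin : m ≤ f (γ t) := hmU _ hnear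
    have hfx : (1 - t) * f x₀ ≤ |f x₀| := by
      have h1 : (1 - t) * f x₀ ≤ (1 - t) * |f x₀| :=
        mul_le_mul_of_nonneg_left (le_abs_self _) (by linarith)
      nlinarith [abs_nonneg (f x₀)]
    have hq : K / 4 * (t * d ^ 2) ≤ K / 2 * (1 - t) * t * d ^ 2 := by
      nlinarith [mul_nonneg (mul_nonneg (mul_nonneg hK.le ht0.le) (sq_nonneg d))
        (by linarith : (0:ℝ) ≤ 1 / 4 - t / 2)]
    have h2 : -C + K / 4 * (t * d ^ 2) ≤ t * f y := by
      have hmabs : -|m| ≤ m := neg_abs_le m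
      rw [hCdef]
      linarith [hkey, hmin, hfx, hq]
    have h6 : 0 ≤ r * K * d ^ 2 / 4 + r * Q - 2 * C * d := by
      have hpos : 0 < r * K := mul_pos hr hK
      have hA : (r * K) * (r * K * d ^ 2 / 4 + r * Q - 2 * C * d)
          = (r * K * d - 4 * C) ^ 2 / 4 := by linear_combination hQ
      have h0 : (r * K) * 0 ≤ (r * K) * (r * K * d ^ 2 / 4 + r * Q - 2 * C * d) := by
        rw [mul_zero, hA]; positivity
      exact le_of_mul_le_mul_left h0 hpos
    have h7 : t * C * M ≤ t * C * (d + r) :=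
      mul_le_mul_of_nonneg_left hMdr (mul_nonneg ht0.le hC0)
    have h8 : r * C = t * (2 * M) * C := by rw [ht_eq]
    have h4 : 0 ≤ (r * t) * (f y + 2 * C + Q) := by
      have F1 := mul_le_mul_of_nonneg_left h2 hr.le
      have F2 := mul_nonneg ht0.le h6
      nlinarith [F1, F2, h7, h8]
    have hrt : 0 < r * t := by positivity
    have h5 : 0 ≤ f y + 2 * C + Q := by
      have := (mul_le_mul_iff_right₀ hrt).mp (by linarith : (r * t) * 0 ≤ (r * t) * (f y + 2 * C + Q))
      linarith
    linarith
  have hne : (Set.range f).Nonempty := ⟨f x₀, mem_range_self _⟩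
  have hbdd' : BddBelow (Set.range f) := ⟨-2 * C - Q, by rintro v ⟨y, rfl⟩; exact hB y⟩
  refine ⟨hbdd', ?_⟩
  set S : ℝ := sInf (Set.range f) with hSdef
  have hS_le : ∀ x : X, S ≤ f x := fun x => csInf_le hbdd' (mem_range_self x)
  -- midpoint estimate
  have hmid : ∀ x y : X, ∃ z : X,
      f z ≤ (f x + f y) / 2 - K / 8 * dist x y ^ 2 := by
    intro x y
    obtain ⟨γ, _, hcv⟩ := hconv x y
    have h := hcv (1/2) ⟨by norm_num, by norm_num⟩
    exact ⟨γ (1/2), by linarith⟩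
  -- closeness of approximate minimizers
  have hclose : ∀ ε : ℝ, 0 < ε → ∀ x y : X, f x ≤ S + ε → f y ≤ S + ε →
      dist x y ≤ Real.sqrt (8 * ε / K) := by
    intro ε hε x y hx hy
    obtain ⟨z, hz⟩ := hmid x y
    have h1 : S ≤ f z := hS_le z
    have h2 : dist x y ^ 2 ≤ 8 * ε / K := by
      rw [le_div_iff₀ hK]
      nlinarith [hz, hx, hy, h1]
    calc dist x y = Real.sqrt (dist x y ^ 2) := (Real.sqrt_sq dist_nonneg).symm
      _ ≤ Real.sqrt (8 * ε / K) := Real.sqrt_le_sqrt h2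
  -- minimizing sequence
  have hex : ∀ n : ℕ, ∃ x : X, f x ≤ S + 1 / (n + 1) := by
    intro n
    obtain ⟨a, ⟨x, rfl⟩, ha⟩ := Real.lt_sInf_add_pos hne
      (show (0:ℝ) < 1 / (n + 1) by positivity)
    exact ⟨x, ha.le⟩
  choose u hu using hex
  have hmono : ∀ n N : ℕ, N ≤ n → f (u n) ≤ S + 1 / (N + 1) := by
    intro n N hn
    refine le_trans (hu n) ?_
    have h1 : (N:ℝ) + 1 ≤ (n:ℝ) + 1 := by exact_mod_cast Nat.succ_le_succ hn
    have := one_div_le_one_div_of_le (by positivity : (0:ℝ) < (N:ℝ) + 1) h1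
    linarith
  have hcauchy : CauchySeq u := by
    apply cauchySeq_of_le_tendsto_0 (fun N : ℕ => Real.sqrt (8 * (1 / (N + 1)) / K))
    · intro n m N hn hm
      exact hclose _ (by positivity) _ _ (hmono n N hn) (hmono m N hm)
    · have h1 : Filter.Tendsto (fun N : ℕ => 8 * (1 / ((N:ℝ) + 1)) / K)
          Filter.atTop (nhds 0) := by
        have := tendsto_one_div_add_atTop_nhds_zero_nat (𝕜 := ℝ)
        have h2 := this.const_mul (8 / K)
        simp only [mul_zero] at h2
        convert h2 using 2 with N
        ring
      have h3 : Filter.Tendsto Real.sqrt (nhds 0) (nhds 0) := by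
        simpa using Real.continuous_sqrt.tendsto 0
      exact h3.comp h1
  obtain ⟨p, hp⟩ := cauchySeq_tendsto_of_complete hcauchy
  have hfpS : f p ≤ S := by
    by_contra h
    push_neg at h
    set y : ℝ := (S + f p) / 2 with hy
    have hy1 : y < f p := by rw [hy]; linarith
    have hy2 : S < y := by rw [hy]; linarith
    have h2 : ∀ᶠ n in Filter.atTop, y < f (u n) := hp.eventually (hlsc p y hy1)
    obtain ⟨N, hN⟩ := exists_nat_one_div_lt (show (0:ℝ) < y - S by linarith)
    obtain ⟨n, hn1, hn2⟩ := (h2.and (Filter.eventually_atTop.2 ⟨N, fun n hn => hn⟩)).exists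
    have h3 : f (u n) ≤ S + 1 / (N + 1) := hmono n N hn2
    have : (1:ℝ) / (N + 1) < y - S := hN
    linarith
  have hpmin : ∀ x : X, f p ≤ f x := fun x => le_trans hfpS (hS_le x)
  refine ⟨p, hpmin, ?_⟩
  intro q hq
  obtain ⟨z, hz⟩ := hmid q p
  have h1 : f q ≤ f z := hq z
  have h2 : f p ≤ f z := hpmin z
  have hd2 : dist q p ^ 2 ≤ 0 := by nlinarith
  have hd : dist q p = 0 := by
    have hdn : (0:ℝ) ≤ dist q p := dist_nonneg
    nlinarith
  exact eq_of_dist_eq_zero hd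
end

section
/- Let (X,d) be a proper δ-hyperbolic geodesic space and f : X → ℝ a K-convex (K ≥ 0), L-Lipschitz (L > 0) function attaining its minimum at p. For any x ∈ X, τ > 0, and any y minimizing z ↦ f(z) + d²(x,z)/(2τ), we have d(p,y) ≤ d(p,x) − d(x,y) + 4√(2τLδ)/√(Kτ+1). -/
open Set

private lemma key_alg {g r δ τ K L : ℝ} (hτ : 0 < τ) (hK : 0 ≤ K) (hL : 0 < L) (hδ : 0 ≤ δ)
    (hg0 : 0 ≤ g) (hgr : g ≤ r)
    (h1 : g^2*(K*τ+3) ≤ 16*δ^2 + 16*δ*r)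
    (h3 : r*(K*τ+2) ≤ 2*τ*L) :
    g^2*(K*τ+1) ≤ 8*τ*L*δ := by
  set u := K*τ with hu
  have hu0 : 0 ≤ u := by positivity
  have hr0 : 0 ≤ r := le_trans hg0 hgr
  rcases le_or_gt (2*δ*(u+1)*(u+2)) (τ*L*(u^2+u+2)) with hc | hc
  · have P1 := mul_le_mul_of_nonneg_right h1 (show (0:ℝ) ≤ (u+2)*(u+1) by positivity)
    have P2 := mul_le_mul_of_nonneg_left h3 (show (0:ℝ) ≤ 16*δ*(u+1) by positivity)
    have P3 := mul_le_mul_of_nonneg_left hc (show (0:ℝ) ≤ 8*δ by linarith)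
    have big : g^2*(u+1)*((u+2)*(u+3)) ≤ 8*τ*L*δ*((u+2)*(u+3)) := by nlinarith [P1, P2, P3]
    have hpos : (0:ℝ) < (u+2)*(u+3) := by positivity
    exact le_of_mul_le_mul_right big hpos
  · have P := mul_le_mul_of_nonneg_right hc.le (show (0:ℝ) ≤ u+2 by linarith)
    have hb2' : τ*L*(u+1)*(u+1) ≤ 2*δ*(u+2)^2*(u+1) := by
      nlinarith [P, mul_nonneg (mul_nonneg hτ.le hL.le) (pow_nonneg hu0 3),
        mul_nonneg (mul_nonneg hτ.le hL.le) (pow_nonneg hu0 2),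
        mul_nonneg (mul_nonneg hτ.le hL.le) hu0, mul_nonneg hτ.le hL.le]
    have hb2 : τ*L*(u+1) ≤ 2*δ*(u+2)^2 :=
      le_of_mul_le_mul_right hb2' (by positivity)
    have hg2 : g^2 ≤ r^2 := by nlinarith
    have hb1 : r^2*(u+2)^2 ≤ (2*τ*L)^2 := by
      nlinarith [h3, mul_nonneg hr0 (show (0:ℝ) ≤ u+2 by linarith)]
    have Q1 : g^2*(u+1)*((u+2)^2) ≤ 8*τ*L*δ*((u+2)^2) := by
      nlinarith [mul_le_mul_of_nonneg_right hb1 (show (0:ℝ) ≤ u+1 by linarith),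
        mul_le_mul_of_nonneg_left hb2 (show (0:ℝ) ≤ 4*τ*L by positivity),
        mul_le_mul_of_nonneg_right hg2 (show (0:ℝ) ≤ (u+2)^2*(u+1) by positivity)]
    exact le_of_mul_le_mul_right Q1 (by positivity)

private lemma combine_ineq {g r δ τ K d2 : ℝ} (hδ : 0 ≤ δ) (hg0 : 0 ≤ g) (hgr : g ≤ r)
    (hlow : r^2 + τ*K*(g^2/4) ≤ d2) (hsq : d2 ≤ (r - g/2 + 2*δ)^2) :
    g^2*(K*τ+3) ≤ 16*δ^2 + 16*δ*r := by
  nlinarith [mul_nonneg (sub_nonneg.mpr hgr) hg0, mul_nonneg hδ hg0]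


set_option maxHeartbeats 2000000

theorem tendency_towards_minimizer {X : Type*} [MetricSpace X] [ProperSpace X]
    {δ K L τ : ℝ} (hδ : 0 ≤ δ) (hK : 0 ≤ K) (hL : 0 < L) (hτ : 0 < τ)
    (hX : IsDeltaHyp X δ) (hgeo : GeodesicSpace X) (f : X → ℝ)
    (hconv : KConvex K f) (hlip : LipschitzL L f)
    (p : X) (hp : ∀ z : X, f p ≤ f z)
    (x y : X) (hy : IsProx f τ x y) :
    dist p y ≤ dist p x - dist x y +
      4 * Real.sqrt (2 * τ * L * δ) / Real.sqrt (K * τ + 1) := by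
  have h2τ : (0:ℝ) < 2*τ := by linarith
  set C := 4 * Real.sqrt (2 * τ * L * δ) / Real.sqrt (K * τ + 1) with hC
  have hC0' : True := trivial
  -- notation
  have ecomm1 : dist y x = dist x y := dist_comm y x
  have ecomm2 : dist p y = dist y p := dist_comm p y
  have ecomm3 : dist p x = dist x p := dist_comm p x
  set r := dist x y with hr
  set D := dist y p with hD
  set g := (dist y x + dist y p - dist x p)/2 with hg
  clear_value C r D g
  have hC0 : 0 ≤ C := by rw [hC]; positivity
  -- reduction to 2*g ≤ C
  suffices h2g : 2*g ≤ C by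
    rw [ecomm2, ecomm3]
    rw [hg, ecomm1] at h2g
    linarith
  have hgr : g ≤ r := by
    rw [hg, ← ecomm1]; linarith [dist_triangle y x p]
  have hgD : g ≤ D := by
    rw [hg, hD]; linarith [dist_triangle y p x, dist_comm p x]
  have hg0 : 0 ≤ g := by
    rw [hg]; linarith [dist_triangle x y p, dist_comm x y, dist_comm y p]
  rcases le_or_gt g 0 with hgneg | hgpos
  · linarith
  have hr0 : 0 < r := lt_of_lt_of_le hgpos hgr
  have hD0 : 0 < D := lt_of_lt_of_le hgpos hgD
  -- Step 1 : r * (K*τ+2) ≤ 2*τ*L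
  obtain ⟨γ, ⟨hγ0, hγ1, hγd⟩, hγc⟩ := hconv y x
  have hlxy : f x - f y ≤ L * r := by
    calc f x - f y ≤ |f x - f y| := le_abs_self _
      _ ≤ L * dist x y := hlip x y
      _ = L * r := by rw [← hr]
  have hrL : r * (K*τ+2) ≤ 2*τ*L := by
    apply le_of_forall_pos_le_add
    intro ε hε
    set t := min 1 (ε/(r*(K*τ+1)+1)) with ht
    clear_value t
    have hden : (0:ℝ) < r*(K*τ+1)+1 := by positivity
    have ht0 : 0 < t := by rw [ht]; exact lt_min one_pos (div_pos hε hden)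
    have ht1 : t ≤ 1 := by rw [ht]; exact min_le_left _ _
    have htm : t ∈ Icc (0:ℝ) 1 := ⟨ht0.le, ht1⟩
    have hc := hγc t htm
    rw [ecomm1] at hc
    have hdist : dist x (γ t) = (1-t)*r := by
      have h := hγd 1 ⟨zero_le_one, le_refl 1⟩ t htm
      rw [hγ1, ecomm1] at h
      rw [h, abs_of_nonneg (by linarith : (0:ℝ) ≤ 1 - t)]
    have hprox := hy (γ t)
    rw [hdist, ← hr] at hprox
    have hstep : (r^2 - ((1-t)*r)^2)/(2*τ) ≤ f (γ t) - f y := by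
      rw [sub_div]; linarith
    have hprox2 : r^2 - ((1-t)*r)^2 ≤ (f (γ t) - f y)*(2*τ) := (div_le_iff₀ h2τ).mp hstep
    have hintc := mul_le_mul_of_nonneg_right hc h2τ.le
    have hlipint := mul_le_mul_of_nonneg_left hlxy (show (0:ℝ) ≤ 2*τ*t by positivity)
    have hq : (t*r)*(r*(K*τ+2) - t*(r*(K*τ+1))) ≤ (t*r)*(2*τ*L) := by
      nlinarith [hprox2, hintc, hlipint]
    have hq2 : r*(K*τ+2) - t*(r*(K*τ+1)) ≤ 2*τ*L :=
      le_of_mul_le_mul_left hq (mul_pos ht0 hr0)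
    have htB : t*(r*(K*τ+1)) ≤ ε := by
      have hle : t ≤ ε/(r*(K*τ+1)+1) := by rw [ht]; exact min_le_right _ _
      have h1 : t*(r*(K*τ+1)) ≤ (ε/(r*(K*τ+1)+1))*(r*(K*τ+1)) :=
        mul_le_mul_of_nonneg_right hle (by positivity)
      have h2 : (ε/(r*(K*τ+1)+1))*(r*(K*τ+1)) ≤ (ε/(r*(K*τ+1)+1))*(r*(K*τ+1)+1) :=
        mul_le_mul_of_nonneg_left (by linarith) (by positivity)
      have h3 : (ε/(r*(K*τ+1)+1))*(r*(K*τ+1)+1) = ε := div_mul_cancel₀ _ (ne_of_gt hden)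
      linarith
    linarith
  -- Step 2 : hyperbolicity + convexity along [y,p]
  obtain ⟨σ, ⟨hσ0, hσ1, hσd⟩, hσc⟩ := hconv y p
  set s := g/(2*D) with hs
  clear_value s
  have hs0 : 0 < s := by rw [hs]; exact div_pos hgpos (by linarith)
  have hs1 : s ≤ 1 := by
    rw [hs, div_le_one (by linarith : (0:ℝ) < 2*D)]; linarith
  have hsm : s ∈ Icc (0:ℝ) 1 := ⟨hs0.le, hs1⟩
  have hsD : s * D = g/2 := by
    rw [hs]; field_simp
  have hdys : dist y (σ s) = g/2 := by
    have h := hσd 0 ⟨le_refl 0, zero_le_one⟩ s hsm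
    rw [hσ0] at h
    rw [h, abs_of_nonpos (by linarith : (0:ℝ) - s ≤ 0)]
    rw [← hD]
    rw [neg_sub, sub_zero]
    exact hsD
  have hdsp : dist (σ s) p = D - g/2 := by
    have h := hσd s hsm 1 ⟨zero_le_one, le_refl 1⟩
    rw [hσ1] at h
    rw [h, abs_of_nonpos (by linarith : s - 1 ≤ 0), ← hD]
    have : (-(s-1))*D = D - s*D := by ring
    rw [this, hsD]
  -- lower bound on dist x (σ s) ^ 2
  have hflow : f (σ s) - f y ≤ - (K/2*(1-s)*s*D^2) := by
    have hc := hσc s hsm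
    rw [← hD] at hc
    linarith [hp y, mul_nonneg hs0.le (sub_nonneg.mpr (hp y))]
  have hproxs := hy (σ s)
  rw [← hr] at hproxs
  have hstep : (r^2 - dist x (σ s)^2)/(2*τ) ≤ f (σ s) - f y := by
    rw [sub_div]; linarith [hproxs]
  have hprox2 : r^2 - dist x (σ s)^2 ≤ (f (σ s) - f y)*(2*τ) := (div_le_iff₀ h2τ).mp hstep
  have hflow2 := mul_le_mul_of_nonneg_right hflow h2τ.le
  have hlow : r^2 + τ*K*((1-s)*s*D^2) ≤ dist x (σ s)^2 := by linarith [hprox2, hflow2]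
  have hKterm : τ*K*(g^2/4) ≤ τ*K*((1-s)*s*D^2) := by
    apply mul_le_mul_of_nonneg_left _ (by positivity : (0:ℝ) ≤ τ*K)
    have e : (1-s)*s*D^2 = (s*D)*(D - s*D) := by ring
    rw [e, hsD]
    linarith [mul_nonneg hg0 (sub_nonneg.mpr hgD)]
  -- upper bound on dist x (σ s) via hyperbolicity
  have hub : dist x (σ s) ≤ r - g/2 + 2*δ := by
    have hhyp := hX y x p (σ s)
    have e1 : gp y p (σ s) = g/2 := by
      rw [gp, ← hD, hdys, dist_comm p (σ s), hdsp]; ring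
    have e2 : gp y x p = g := by
      rw [gp, hg]
    rw [e1, e2] at hhyp
    have emin : min g (g/2) = g/2 := min_eq_right (by linarith)
    rw [emin] at hhyp
    rw [gp, ecomm1, hdys] at hhyp
    linarith
  have hsq : dist x (σ s)^2 ≤ (r - g/2 + 2*δ)^2 :=
    pow_le_pow_left₀ dist_nonneg hub 2
  -- combine to polynomial inequality h1
  have hlow' : r^2 + τ*K*(g^2/4) ≤ dist x (σ s)^2 := by linarith [hlow, hKterm]
  have h1 : g^2*(K*τ+3) ≤ 16*δ^2 + 16*δ*r := combine_ineq hδ hg0 hgr hlow' hsq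
  have hfin : g^2*(K*τ+1) ≤ 8*τ*L*δ := key_alg hτ hK hL hδ hg0 hgr h1 hrL
  -- conclude : g ≤ sqrt(8τLδ/(Kτ+1)) = 2 sqrt(2τLδ)/sqrt(Kτ+1)
  have hKτ1 : (0:ℝ) < K*τ+1 := by positivity
  have hgle : g ≤ Real.sqrt (8*τ*L*δ/(K*τ+1)) := by
    rw [Real.le_sqrt hg0 (by positivity)]
    rw [le_div_iff₀ hKτ1]
    linarith [hfin]
  have heq : Real.sqrt (8*τ*L*δ/(K*τ+1)) = 2 * Real.sqrt (2*τ*L*δ) / Real.sqrt (K*τ+1) := by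
    rw [Real.sqrt_div (by positivity : (0:ℝ) ≤ 8*τ*L*δ)]
    congr 1
    rw [show (8*τ*L*δ : ℝ) = 4*(2*τ*L*δ) by ring,
      Real.sqrt_mul (by norm_num : (0:ℝ) ≤ 4),
      show Real.sqrt 4 = 2 by
        rw [show (4:ℝ) = 2^2 by norm_num, Real.sqrt_sq (by norm_num : (0:ℝ) ≤ 2)]]
  calc 2*g ≤ 2*Real.sqrt (8*τ*L*δ/(K*τ+1)) := by linarith
    _ = C := by rw [heq, hC]; ring
end

section
/- Let f : X → ℝ be K-convex and L-Lipschitz with K, L > 0 on a geodesic space, attaining its minimum at p. For any x ∈ X, τ > 1/K, and y ∈ argmin_{z} { f(z) + d²(x,z)/(2τ) }, we have d(x,y) ≥ (1 − 1/(Kτ))·(f(x) − f(p))/L. -/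
/-!
Test the proximal inequality at the point `γ t` of a `K`-convex geodesic from `y` to `p` and let
`t → 0⁺`: this yields the slope bound `f y - f p ≤ d(x,y) d(y,p)/τ - (K/2) d(y,p)²`, and by AM-GM
`K τ (f y - f p) ≤ d(x,y)²/(2τ) ≤ f x - f y`. Hence the proximal step removes at least the fraction
`1 - 1/(Kτ)` of the gap `f x - f p`, while by Lipschitz continuity it removes at most `L d(x,y)`.
-/

open Set

open Filter Topology

lemma le_of_forall_mem_Ioc_le_add_mul {a b c : ℝ}
    (h : ∀ t ∈ Ioc (0:ℝ) 1, a ≤ b + t * c) : a ≤ b := by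
  have hlim : Tendsto (fun t : ℝ => b + t * c) (𝓝[>] 0) (𝓝 b) := by
    have : Continuous fun t : ℝ => b + t * c := by fun_prop
    simpa using this.continuousWithinAt.tendsto (x := 0) (s := Ioi 0)
  exact ge_of_tendsto hlim (mem_of_superset (Ioc_mem_nhdsGT one_pos) h)

section

variable {X : Type*} [MetricSpace X]

lemma IsGeodesic.dist_left_apply {γ : ℝ → X} {x y : X} (hγ : IsGeodesic γ x y) {t : ℝ}
    (ht : t ∈ Icc (0:ℝ) 1) : dist x (γ t) = t * dist x y := by
  obtain ⟨h0, -, hd⟩ := hγ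
  have := hd 0 ⟨le_rfl, zero_le_one⟩ t ht
  rwa [h0, zero_sub, abs_neg, abs_of_nonneg ht.1] at this

variable {f : X → ℝ} {K τ : ℝ} {x y : X}

lemma IsProx.dist_sq_div_le (hy : IsProx f τ x y) : dist x y ^ 2 / (2 * τ) ≤ f x - f y := by
  have := hy x
  rw [dist_self] at this
  linarith [show (0:ℝ) ^ 2 / (2 * τ) = 0 by simp]

lemma IsProx.sub_le_of_kConvex (hy : IsProx f τ x y) (hτ : 0 < τ) (hconv : KConvex K f)
    (p : X) : f y - f p ≤ dist x y * dist y p / τ - K / 2 * dist y p ^ 2 := by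
  obtain ⟨γ, hγ, hfγ⟩ := hconv y p
  refine le_of_forall_mem_Ioc_le_add_mul
    (c := K / 2 * dist y p ^ 2 + dist y p ^ 2 / (2 * τ)) fun t ht => ?_
  have htI : t ∈ Icc (0:ℝ) 1 := Ioc_subset_Icc_self ht
  have htri : dist x (γ t) ≤ dist x y + t * dist y p :=
    (dist_triangle x y (γ t)).trans_eq (by rw [hγ.dist_left_apply htI])
  have hsq : dist x (γ t) ^ 2 / (2 * τ) ≤ (dist x y + t * dist y p) ^ 2 / (2 * τ) := by
    gcongr
  have hexpand : (dist x y + t * dist y p) ^ 2 / (2 * τ) = dist x y ^ 2 / (2 * τ)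
      + t * (dist x y * dist y p / τ) + t * (t * (dist y p ^ 2 / (2 * τ))) := by
    field_simp; ring
  refine le_of_mul_le_mul_left ?_ ht.1
  linarith [hy (γ t), hfγ t htI]

lemma IsProx.mul_sub_le_of_kConvex (hy : IsProx f τ x y) (hK : 0 < K) (hτ : 0 < τ)
    (hconv : KConvex K f) (p : X) : K * τ * (f y - f p) ≤ f x - f y := by
  have hslope := hy.sub_le_of_kConvex hτ hconv p
  have hamgm : K * τ * (dist x y * dist y p / τ - K / 2 * dist y p ^ 2) ≤
      dist x y ^ 2 / (2 * τ) := by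
    have : 0 ≤ (dist x y - K * τ * dist y p) ^ 2 / (2 * τ) := by positivity
    have hid : (dist x y - K * τ * dist y p) ^ 2 / (2 * τ) = dist x y ^ 2 / (2 * τ) -
        K * τ * (dist x y * dist y p / τ - K / 2 * dist y p ^ 2) := by
      field_simp; ring
    linarith
  calc K * τ * (f y - f p)
      ≤ K * τ * (dist x y * dist y p / τ - K / 2 * dist y p ^ 2) :=
        mul_le_mul_of_nonneg_left hslope (by positivity)
    _ ≤ dist x y ^ 2 / (2 * τ) := hamgm
    _ ≤ f x - f y := hy.dist_sq_div_le

end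

theorem prox_step_lower_bound_general {X : Type*} [MetricSpace X] {K L τ : ℝ}
    (hK : 0 < K) (hL : 0 < L) (hτ : 1 / K < τ)
    (f : X → ℝ)
    (hconv : KConvex K f) (hlip : LipschitzL L f)
    (p : X) (hp : ∀ z : X, f p ≤ f z)
    (x y : X) (hy : IsProx f τ x y) :
    dist x y ≥ (1 - 1 / (K * τ)) * (f x - f p) / L := by
  have hτ0 : 0 < τ := (one_div_pos.mpr hK).trans hτ
  have hdescent := hy.mul_sub_le_of_kConvex hK hτ0 hconv p
  have hstep : K * τ * (f x - f y) ≤ K * τ * (L * dist x y) := by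
    gcongr
    exact (le_abs_self _).trans (hlip x y)
  rw [ge_iff_le, div_le_iff₀ hL, one_sub_div (by positivity), div_mul_eq_mul_div,
    div_le_iff₀ (by positivity)]
  linarith [hp y]

theorem prox_step_lower_bound {X : Type*} [MetricSpace X] {K L τ : ℝ}
    (hK : 0 < K) (hL : 0 < L) (hτ : 1 / K < τ)
    (hgeo : GeodesicSpace X) (f : X → ℝ)
    (hconv : KConvex K f) (hlip : LipschitzL L f)
    (p : X) (hp : ∀ z : X, f p ≤ f z)
    (x y : X) (hy : IsProx f τ x y) :
    dist x y ≥ (1 - 1 / (K * τ)) * (f x - f p) / L :=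
  prox_step_lower_bound_general hK hL hτ f hconv hlip p hp x y hy
end

section
/- Let f : X → ℝ be K-convex and L-Lipschitz with K, L > 0 on a geodesic space, attaining its minimum at p. For any x ∈ X, τ > 1/K, and y ∈ argmin_z { f(z) + d²(x,z)/(2τ) }, we have f(y) ≤ f(x) − (Kτ − 1)²(f(x) − f(p))²/(2(KL)²τ³). -/
open Set

/- The midpoint `m` of a geodesic from `x` to the minimiser `p` is a competitor in the proximal
problem: `K`-convexity gives `f m ≤ (f x + f p)/2 - K d²/8` with `d = dist x p`, while
`dist x m = d/2`, so `f y ≤ f x - (f x - f p)/2 - (Kτ - 1) d²/(8τ)`. The Lipschitz bound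
`f x - f p ≤ L d` converts the `d²` term into the claimed one, since `4(Kτ - 1) ≤ (Kτ)²`. -/

theorem IsGeodesic.dist_left {X : Type*} [MetricSpace X] {γ : ℝ → X} {x y : X}
    (hγ : IsGeodesic γ x y) {t : ℝ} (ht : t ∈ Icc (0:ℝ) 1) : dist x (γ t) = t * dist x y := by
  obtain ⟨h0, -, hdist⟩ := hγ
  rw [← h0, hdist 0 ⟨le_rfl, zero_le_one⟩ t ht, h0, zero_sub, abs_neg, abs_of_nonneg ht.1]

theorem IsProx.le_of_kConvex {X : Type*} [MetricSpace X] {K τ : ℝ} {f : X → ℝ} {x y : X}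
    (hy : IsProx f τ x y) (hτ : 0 ≤ τ) (hconv : KConvex K f) (w : X) {t : ℝ}
    (ht : t ∈ Icc (0:ℝ) 1) :
    f y ≤ (1 - t) * f x + t * f w - (K * (1 - t) - t / τ) * t / 2 * dist x w ^ 2 := by
  obtain ⟨γ, hγ, hγf⟩ := hconv x w
  have hcomp := hy (γ t)
  rw [hγ.dist_left ht] at hcomp
  have hxy : 0 ≤ dist x y ^ 2 / (2 * τ) := by positivity
  have hexpand : (t * dist x w) ^ 2 / (2 * τ) = t / τ * t / 2 * dist x w ^ 2 := by ring
  linarith [hγf t ht]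

theorem prox_coeff_le {K τ : ℝ} (hK : 0 < K) (hτ : 0 < τ) (hKτ : 1 ≤ K * τ) :
    (K * τ - 1) ^ 2 / (2 * K ^ 2 * τ ^ 3) ≤ (K * τ - 1) / (8 * τ) := by
  rw [div_le_div_iff₀ (by positivity) (by positivity)]
  have hsq : 4 * (K * τ - 1) ≤ (K * τ) ^ 2 := by nlinarith [sq_nonneg (K * τ - 2)]
  have hpos : 0 ≤ (K * τ - 1) * (2 * τ) := by nlinarith
  nlinarith [mul_le_mul_of_nonneg_left hsq hpos]

theorem prox_value_decrease_general {X : Type*} [MetricSpace X] {K L τ : ℝ}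
    (hK : 0 < K) (hL : 0 < L) (hτ : 1 / K < τ)
    (f : X → ℝ)
    (hconv : KConvex K f) (hlip : LipschitzL L f)
    (p : X) (hp : ∀ z : X, f p ≤ f z)
    (x y : X) (hy : IsProx f τ x y) :
    f y ≤ f x - (K * τ - 1) ^ 2 * (f x - f p) ^ 2 / (2 * (K * L) ^ 2 * τ ^ 3) := by
  have hτ0 : 0 < τ := lt_trans (by positivity) hτ
  have hKτ : 1 ≤ K * τ := by rw [div_lt_iff₀ hK] at hτ; linarith
  have hmid := hy.le_of_kConvex hτ0.le hconv p (t := 1 / 2) ⟨by norm_num, by norm_num⟩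
  have hgap : 0 ≤ f x - f p := sub_nonneg.mpr (hp x)
  have hgap_le : (f x - f p) / L ≤ dist x p :=
    (div_le_iff₀ hL).mpr (by linarith [le_abs_self (f x - f p), hlip x p])
  have hsq : ((f x - f p) / L) ^ 2 ≤ dist x p ^ 2 :=
    pow_le_pow_left₀ (div_nonneg hgap hL.le) hgap_le 2
  calc f y ≤ f x - (f x - f p) / 2 - (K * τ - 1) / (8 * τ) * dist x p ^ 2 := by
        convert hmid using 1; field_simp; ring
    _ ≤ f x - (K * τ - 1) / (8 * τ) * dist x p ^ 2 := by linarith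
    _ ≤ f x - (K * τ - 1) ^ 2 / (2 * K ^ 2 * τ ^ 3) * dist x p ^ 2 := by
        gcongr f x - ?_ * _; exact prox_coeff_le hK hτ0 hKτ
    _ ≤ f x - (K * τ - 1) ^ 2 / (2 * K ^ 2 * τ ^ 3) * ((f x - f p) / L) ^ 2 := by gcongr
    _ = f x - (K * τ - 1) ^ 2 * (f x - f p) ^ 2 / (2 * (K * L) ^ 2 * τ ^ 3) := by
        field_simp

theorem prox_value_decrease {X : Type*} [MetricSpace X] {K L τ : ℝ}
    (hK : 0 < K) (hL : 0 < L) (hτ : 1 / K < τ)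
    (hgeo : GeodesicSpace X) (f : X → ℝ)
    (hconv : KConvex K f) (hlip : LipschitzL L f)
    (p : X) (hp : ∀ z : X, f p ≤ f z)
    (x y : X) (hy : IsProx f τ x y) :
    f y ≤ f x - (K * τ - 1) ^ 2 * (f x - f p) ^ 2 / (2 * (K * L) ^ 2 * τ ^ 3) :=
  prox_value_decrease_general hK hL hτ f hconv hlip p hp x y hy
end

section
/- Let (X,d) be a proper δ-hyperbolic geodesic space and f : X → ℝ a K-convex (K ≥ 0), L-Lipschitz (L > 0) function with minimizer p. Take x_1, x_2 ∈ X, τ > 0, y_i ∈ argmin_z { f(z) + d²(x_i,z)/(2τ) } for i = 1,2, with d(p,y_1) ≤ d(p,y_2). If d(p,y_1) ≥ (x_1|x_2)_p, then d(y_1,y_2) ≤ d(x_1,x_2) − d(x_1,y_1) − d(x_2,y_2) + 8√(2τLδ)/√(Kτ+1) + 12δ. -/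
open Set

/-! A proximal point `y` of `x` lies close to a geodesic from `x` to the minimizer `p`: comparing
`y` with the point at distance `(x|p)_y` from `y` towards `p`, `δ`-hyperbolicity and `K`-convexity
give `(x|p)_y ≤ 2δ` and `(Kτ + 1) (x|p)_y² ≤ 8τLδ`. Expanding `d(y₁, y₂)` through Gromov products at
`p`, it remains to see that `(y₁|y₂)_p` is at most `4δ` below `(x₁|x₂)_p`, which follows from two
applications of the four-point condition, since both `yᵢ` are at distance at least `(x₁|x₂)_p` from `p`. -/

section

variable {X : Type*} [MetricSpace X]

lemma gp_nonneg (x y z : X) : 0 ≤ gp x y z := by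
  have := dist_triangle y x z
  rw [dist_comm y x] at this
  unfold gp
  linarith

lemma gp_comm (x y z : X) : gp x y z = gp x z y := by
  unfold gp
  rw [dist_comm y z]
  ring

lemma gp_add_gp_swap (x y z : X) : gp x y z + gp y x z = dist x y := by
  unfold gp
  rw [dist_comm y x]
  ring

lemma gp_le_dist_left (x y z : X) : gp x y z ≤ dist x y := by
  have := dist_triangle x y z
  unfold gp
  linarith

lemma gp_le_dist_right (x y z : X) : gp x y z ≤ dist x z := by
  rw [gp_comm]
  exact gp_le_dist_left x z y

lemma dist_eq_dist_sub_add_gp (p x₁ x₂ y₁ y₂ : X) :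
    dist y₁ y₂ = dist x₁ x₂ - dist x₁ y₁ - dist x₂ y₂ + 2 * gp y₁ x₁ p + 2 * gp y₂ x₂ p +
      2 * (gp p x₁ x₂ - gp p y₁ y₂) := by
  unfold gp
  rw [dist_comm y₁ x₁, dist_comm y₂ x₂, dist_comm y₁ p, dist_comm y₂ p, dist_comm x₁ p,
    dist_comm x₂ p]
  ring

lemma IsDeltaHyp.gp_le_gp_add {δ c : ℝ} (hX : IsDeltaHyp X δ) (hδ : 0 ≤ δ) {p x₁ x₂ y₁ y₂ : X}
    (h₁ : gp p x₁ x₂ ≤ dist p y₁) (h₂ : gp p x₁ x₂ ≤ dist p y₂)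
    (hc₁ : gp y₁ x₁ p ≤ c) (hc₂ : gp y₂ x₂ p ≤ c) :
    gp p x₁ x₂ ≤ gp p y₁ y₂ + c + 2 * δ := by
  have hc : 0 ≤ c := (gp_nonneg _ _ _).trans hc₁
  have hy₁x₁ : gp p x₁ x₂ - c ≤ gp p y₁ x₁ := by
    have := gp_add_gp_swap p y₁ x₁
    rw [gp_comm y₁] at this
    linarith
  have hx₂y₂ : gp p x₁ x₂ - c ≤ gp p x₂ y₂ := by
    have := gp_add_gp_swap p y₂ x₂
    rw [gp_comm y₂, gp_comm p y₂] at this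
    linarith
  have hx₁y₂ : gp p x₁ x₂ - c - δ ≤ gp p x₁ y₂ := by
    have := hX p x₁ x₂ y₂
    have := le_min (by linarith : gp p x₁ x₂ - c ≤ gp p x₁ x₂) hx₂y₂
    linarith
  have := hX p y₁ x₁ y₂
  have := le_min (by linarith : gp p x₁ x₂ - c - δ ≤ gp p y₁ x₁) hx₁y₂
  linarith

lemma KConvex.exists_dist_eq {K : ℝ} {f : X → ℝ} (hconv : KConvex K f) (x y : X) {t : ℝ}
    (ht : t ∈ Icc (0 : ℝ) 1) :
    ∃ m, dist x m = t * dist x y ∧ dist m y = (1 - t) * dist x y ∧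
      f m ≤ (1 - t) * f x + t * f y - K / 2 * (1 - t) * t * dist x y ^ 2 := by
  obtain ⟨γ, ⟨hγ0, hγ1, hγd⟩, hγf⟩ := hconv x y
  have h0 : (0 : ℝ) ∈ Icc (0 : ℝ) 1 := ⟨le_rfl, zero_le_one⟩
  have h1 : (1 : ℝ) ∈ Icc (0 : ℝ) 1 := ⟨zero_le_one, le_rfl⟩
  refine ⟨γ t, ?_, ?_, hγf t ht⟩
  · rw [← hγ0, hγd 0 h0 t ht, hγ0, zero_sub, abs_neg, abs_of_nonneg ht.1]
  · rw [← hγ1, hγd t ht 1 h1, hγ1, abs_sub_comm, abs_of_nonneg (sub_nonneg.2 ht.2)]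

lemma KConvex.exists_dist_eq_of_le {K : ℝ} {f : X → ℝ} (hconv : KConvex K f) {y p : X}
    (hfp : f p ≤ f y) {s : ℝ} (hs₀ : 0 ≤ s) (hs : s ≤ dist y p) :
    ∃ m, dist y m = s ∧ dist m p = dist y p - s ∧
      f m ≤ f y - K / 2 * (dist y p - s) * s := by
  rcases (dist_nonneg : (0 : ℝ) ≤ dist y p).eq_or_lt with hD | hD
  · obtain rfl : s = 0 := le_antisymm (hD ▸ hs) hs₀
    exact ⟨y, dist_self y, by rw [← hD, sub_zero], by simp⟩
  set t := s / dist y p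
  have hts : t * dist y p = s := div_mul_cancel₀ s hD.ne'
  have ht : t ∈ Icc (0 : ℝ) 1 := ⟨div_nonneg hs₀ hD.le, (div_le_one hD).2 hs⟩
  obtain ⟨m, hym, hmp, hfm⟩ := hconv.exists_dist_eq y p ht
  refine ⟨m, hym.trans hts, by rw [hmp, sub_mul, one_mul, hts], ?_⟩
  have hgain : (1 - t) * t * dist y p ^ 2 = (dist y p - s) * s := by
    rw [← hts]; ring
  rw [show K / 2 * (1 - t) * t * dist y p ^ 2 = K / 2 * ((1 - t) * t * dist y p ^ 2) by ring,
    hgain] at hfm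
  linarith [mul_le_mul_of_nonneg_left hfp ht.1]

section Prox

variable {f : X → ℝ} {τ K L δ : ℝ} {x y p : X}

lemma IsProx.two_mul_add_sq_le (hy : IsProx f τ x y) (hτ : 0 < τ) (z : X) :
    2 * τ * f y + dist x y ^ 2 ≤ 2 * τ * f z + dist x z ^ 2 := by
  have := mul_le_mul_of_nonneg_left (hy z) (by positivity : (0 : ℝ) ≤ 2 * τ)
  field_simp at this
  linarith

lemma IsProx.dist_le_of_forall_le (hy : IsProx f τ x y) (hτ : 0 < τ) (hp : ∀ z, f p ≤ f z) :
    dist x y ≤ dist x p := by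
  have := hy.two_mul_add_sq_le hτ p
  have := mul_le_mul_of_nonneg_left (hp y) (by positivity : (0 : ℝ) ≤ 2 * τ)
  exact pow_le_pow_iff_left₀ dist_nonneg dist_nonneg two_ne_zero |>.1 (by linarith)

/-- Compare `y` with the midpoint of `y` and `x`. -/
lemma IsProx.mul_dist_le (hy : IsProx f τ x y) (hτ : 0 < τ) (hconv : KConvex K f)
    (hlip : LipschitzL L f) (hL : 0 ≤ L) :
    (3 + K * τ) * dist x y ≤ 4 * τ * L := by
  rcases (dist_nonneg : (0 : ℝ) ≤ dist x y).eq_or_lt with hd | hd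
  · rw [← hd, mul_zero]; positivity
  obtain ⟨m, -, hmx, hfm⟩ := hconv.exists_dist_eq y x (t := 1 / 2) ⟨by norm_num, by norm_num⟩
  have hprox := hy.two_mul_add_sq_le hτ m
  rw [dist_comm x m, hmx, dist_comm y x] at hprox
  rw [dist_comm y x] at hfm
  have hfx := (abs_le.1 (hlip x y)).2
  have hτf := mul_le_mul_of_nonneg_left hfm hτ.le
  have hτx := mul_le_mul_of_nonneg_left hfx hτ.le
  refine le_of_mul_le_mul_right ?_ hd
  nlinarith

/-- `y` is compared with the point `m` at distance `(x|p)_y` from `y` on a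
geodesic towards `p`; by `δ`-hyperbolicity `m` is within `d(x, y) - (x|p)_y + 2δ` of `x`. -/
lemma IsProx.sq_dist_add_le (hy : IsProx f τ x y) (hτ : 0 < τ) (hX : IsDeltaHyp X δ)
    (hconv : KConvex K f) (hp : ∀ z, f p ≤ f z) :
    dist x y ^ 2 + K * τ * (dist y p - gp y x p) * gp y x p ≤
      (dist x y - gp y x p + 2 * δ) ^ 2 := by
  set g := gp y x p
  obtain ⟨m, hym, hmp, hfm⟩ :=
    hconv.exists_dist_eq_of_le (hp y) (gp_nonneg y x p) (gp_le_dist_right y x p)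
  have hgp : gp y p m = g := by
    unfold gp
    rw [hym, dist_comm p m, hmp]
    ring
  have hxm : dist x m ≤ dist x y - g + 2 * δ := by
    have hyp := hX y x p m
    rw [hgp, min_self] at hyp
    have : gp y x m = (dist x y + g - dist x m) / 2 := by
      unfold gp
      rw [hym, dist_comm y x]
    linarith
  have hxm2 := pow_le_pow_left₀ dist_nonneg hxm 2
  have hprox := hy.two_mul_add_sq_le hτ m
  have := mul_le_mul_of_nonneg_left hfm (by positivity : (0 : ℝ) ≤ 2 * τ)
  nlinarith

lemma IsProx.gp_le_two_mul (hy : IsProx f τ x y) (hτ : 0 < τ) (hX : IsDeltaHyp X δ)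
    (hconv : KConvex K f) (hp : ∀ z, f p ≤ f z) (hK : 0 ≤ K) (hδ : 0 ≤ δ) :
    gp y x p ≤ 2 * δ := by
  have key := hy.sq_dist_add_le hτ hX hconv hp
  have hg₀ := gp_nonneg y x p
  have hga : gp y x p ≤ dist x y := dist_comm y x ▸ gp_le_dist_left y x p
  have hgain : 0 ≤ K * τ * (dist y p - gp y x p) * gp y x p :=
    mul_nonneg (mul_nonneg (by positivity) (sub_nonneg.2 (gp_le_dist_right y x p))) hg₀
  by_contra! hcon
  nlinarith [mul_le_mul_of_nonneg_right hga (by linarith : (0 : ℝ) ≤ gp y x p - 2 * δ)]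

lemma IsProx.mul_sq_gp_le (hy : IsProx f τ x y) (hτ : 0 < τ) (hX : IsDeltaHyp X δ)
    (hconv : KConvex K f) (hp : ∀ z, f p ≤ f z) (hK : 0 ≤ K) (hδ : 0 ≤ δ) :
    (K * τ + 1) * gp y x p ^ 2 ≤ 2 * δ * ((3 + K * τ) * dist x y) := by
  set g := gp y x p
  have hg₀ : 0 ≤ g := gp_nonneg y x p
  have hga : g ≤ dist x y := dist_comm y x ▸ gp_le_dist_left y x p
  have hκ : 0 ≤ K * τ := by positivity
  have hκa := mul_nonneg hκ (dist_nonneg (x := x) (y := y))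
  rcases le_or_gt δ g with hδg | hgδ
  · have key := hy.sq_dist_add_le hτ hX hconv hp
    -- `2 (x|p)_y ≤ d(y, p)` because `y` is no farther from `x` than `p` is
    have h2g : 2 * g ≤ dist y p := by
      have := hy.dist_le_of_forall_le hτ hp
      simp only [g, gp]
      rw [dist_comm y x]
      linarith
    have : 0 ≤ K * τ * g * (dist y p - 2 * g) :=
      mul_nonneg (mul_nonneg hκ hg₀) (by linarith)
    nlinarith [mul_nonneg (sub_nonneg.2 hga) hg₀, mul_nonneg (sub_nonneg.2 hδg) hδ]
  · have := mul_le_mul_of_nonneg_left hga (mul_nonneg (by linarith : 0 ≤ K * τ + 1) hg₀)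
    nlinarith [mul_le_mul_of_nonneg_left hgδ.le (mul_nonneg (by linarith : 0 ≤ K * τ + 1)
      (dist_nonneg (x := x) (y := y)))]

lemma IsProx.gp_le_sqrt (hy : IsProx f τ x y) (hτ : 0 < τ) (hX : IsDeltaHyp X δ)
    (hconv : KConvex K f) (hlip : LipschitzL L f) (hp : ∀ z, f p ≤ f z) (hK : 0 ≤ K)
    (hL : 0 ≤ L) (hδ : 0 ≤ δ) :
    gp y x p ≤ 2 * Real.sqrt (2 * τ * L * δ) / Real.sqrt (K * τ + 1) := by
  have hκ : 0 < K * τ + 1 := by positivity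
  have hsq : (K * τ + 1) * gp y x p ^ 2 ≤ 4 * (2 * τ * L * δ) := by
    have := hy.mul_sq_gp_le hτ hX hconv hp hK hδ
    have := mul_le_mul_of_nonneg_left (hy.mul_dist_le hτ hconv hlip hL) hδ
    nlinarith
  rw [le_div_iff₀ (Real.sqrt_pos.2 hκ)]
  calc gp y x p * Real.sqrt (K * τ + 1)
      = Real.sqrt ((K * τ + 1) * gp y x p ^ 2) := by
        rw [Real.sqrt_mul hκ.le, Real.sqrt_sq (gp_nonneg y x p), mul_comm]
    _ ≤ Real.sqrt (4 * (2 * τ * L * δ)) := Real.sqrt_le_sqrt hsq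
    _ = 2 * Real.sqrt (2 * τ * L * δ) := by
        rw [Real.sqrt_mul (by norm_num), show (4 : ℝ) = 2 ^ 2 by norm_num,
          Real.sqrt_sq (by norm_num)]

end Prox

end

theorem contraction_case_one_general {X : Type*} [MetricSpace X]
    {δ K L τ : ℝ} (hδ : 0 ≤ δ) (hK : 0 ≤ K) (hL : 0 < L) (hτ : 0 < τ)
    (hX : IsDeltaHyp X δ) (f : X → ℝ)
    (hconv : KConvex K f) (hlip : LipschitzL L f)
    (p : X) (hp : ∀ z : X, f p ≤ f z)
    (x₁ x₂ y₁ y₂ : X) (hy₁ : IsProx f τ x₁ y₁) (hy₂ : IsProx f τ x₂ y₂)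
    (hord : dist p y₁ ≤ dist p y₂) (hcase : dist p y₁ ≥ gp p x₁ x₂) :
    dist y₁ y₂ ≤ dist x₁ x₂ - dist x₁ y₁ - dist x₂ y₂ +
      8 * Real.sqrt (2 * τ * L * δ) / Real.sqrt (K * τ + 1) + 12 * δ := by
  have hprod := hX.gp_le_gp_add hδ hcase (hcase.trans hord)
    (hy₁.gp_le_two_mul hτ hX hconv hp hK hδ) (hy₂.gp_le_two_mul hτ hX hconv hp hK hδ)
  have h₁ := hy₁.gp_le_sqrt hτ hX hconv hlip hp hK hL.le hδ
  have h₂ := hy₂.gp_le_sqrt hτ hX hconv hlip hp hK hL.le hδ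
  rw [dist_eq_dist_sub_add_gp p x₁ x₂ y₁ y₂, mul_div_assoc]
  rw [mul_div_assoc] at h₁ h₂
  linarith

theorem contraction_case_one {X : Type*} [MetricSpace X] [ProperSpace X]
    {δ K L τ : ℝ} (hδ : 0 ≤ δ) (hK : 0 ≤ K) (hL : 0 < L) (hτ : 0 < τ)
    (hX : IsDeltaHyp X δ) (hgeo : GeodesicSpace X) (f : X → ℝ)
    (hconv : KConvex K f) (hlip : LipschitzL L f)
    (p : X) (hp : ∀ z : X, f p ≤ f z)
    (x₁ x₂ y₁ y₂ : X) (hy₁ : IsProx f τ x₁ y₁) (hy₂ : IsProx f τ x₂ y₂)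
    (hord : dist p y₁ ≤ dist p y₂) (hcase : dist p y₁ ≥ gp p x₁ x₂) :
    dist y₁ y₂ ≤ dist x₁ x₂ - dist x₁ y₁ - dist x₂ y₂ +
      8 * Real.sqrt (2 * τ * L * δ) / Real.sqrt (K * τ + 1) + 12 * δ :=
  contraction_case_one_general hδ hK hL hτ hX f hconv hlip p hp x₁ x₂ y₁ y₂ hy₁ hy₂ hord hcase
end

section
/- With the setting of the previous statement and additionally K > 0 and τ > 1/K, if d(p,y_1) ≥ (x_1|x_2)_p then d(y_1,y_2) ≤ d(x_1,x_2) − (1 − 1/(Kτ))·(f(x_1) + f(x_2) − 2f(p))/L + 8√(2τLδ)/√(Kτ+1) + 12δ. -/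
open Set

section Aux
variable {X : Type*} [MetricSpace X]

/-- Basic: `dist x y ≤ 2 τ L` for a prox point. -/
lemma prox_dist_le {f : X → ℝ} {L τ : ℝ} (hL : 0 < L) (hτ0 : 0 < τ)
    (hlip : LipschitzL L f) {x y : X} (hy : IsProx f τ x y) :
    dist x y ≤ 2 * τ * L := by
  have h1 := hy x
  rw [dist_self] at h1
  norm_num at h1
  have h2 := (abs_le.mp (hlip x y)).2
  have h3 : dist x y ^ 2 / (2 * τ) ≤ L * dist x y := by linarith
  have h4 : dist x y ^ 2 ≤ L * dist x y * (2 * τ) := by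
    rw [div_le_iff₀ (by positivity)] at h3; exact h3
  nlinarith [dist_nonneg (x := x) (y := y), mul_pos hτ0 hL]

/-- `K dist x y ≤ 4 L` for a prox point. -/
lemma prox_Kdist {f : X → ℝ} {K L τ : ℝ} (hK : 0 < K) (hL : 0 < L) (hτ0 : 0 < τ)
    (hconv : KConvex K f) (hlip : LipschitzL L f) {p : X} (hp : ∀ z, f p ≤ f z)
    {x y : X} (hy : IsProx f τ x y) : K * dist x y ≤ 4 * L := by
  rcases eq_or_lt_of_le (dist_nonneg : 0 ≤ dist x y) with h0 | hd0
  · rw [← h0, mul_zero]; positivity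
  · have hda : dist x y ≤ dist x p := by
      have h1 := hy p
      have h2 := hp y
      have h3 : dist x y ^ 2 / (2 * τ) ≤ dist x p ^ 2 / (2 * τ) := by linarith
      rw [div_le_div_iff_of_pos_right (by positivity)] at h3
      nlinarith [dist_nonneg (x := x) (y := y), dist_nonneg (x := x) (y := p)]
    have ha0 : 0 < dist x p := lt_of_lt_of_le hd0 hda
    obtain ⟨σ, ⟨hσ0, hσ1, hσd⟩, hσf⟩ := hconv x p
    set a := dist x p with hadef
    set d := dist x y with hddef
    set s := d / (2 * a) with hs
    have hs0 : 0 ≤ s := by positivity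
    have hs1 : s ≤ 1 / 2 := by rw [hs, div_le_iff₀ (by positivity)]; linarith
    have hsmem : s ∈ Icc (0:ℝ) 1 := ⟨hs0, by linarith⟩
    have hsa : s * a = d / 2 := by rw [hs]; field_simp
    have hdxz : dist x (σ s) = d / 2 := by
      have h := hσd 0 ⟨le_refl _, zero_le_one⟩ s hsmem
      rw [hσ0] at h
      rw [h, abs_of_nonpos (by linarith : (0:ℝ) - s ≤ 0), neg_sub, sub_zero]
      exact hsa
    have h1 := hy (σ s)
    rw [hdxz, ← hddef] at h1
    have hfyz : f y ≤ f (σ s) := by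
      have hq : (d / 2) ^ 2 / (2 * τ) ≤ d ^ 2 / (2 * τ) := by
        apply div_le_div_of_nonneg_right ?_ (by positivity)
        nlinarith [dist_nonneg (x := x) (y := y)]
      linarith
    have h2 := hσf s hsmem
    have hfxp : f x - f p ≤ L * a := by
      have h3 := (abs_le.mp (hlip x p)).2
      rw [← hadef] at h3
      linarith
    have hcomb : K / 2 * (1 - s) * s * a ^ 2 ≤ (1 - s) * (f x - f p) := by
      have h5 := hp y
      nlinarith [hfyz, h2]
    have hcomb2 : K / 2 * (1 - s) * (s * a ^ 2) ≤ (1 - s) * (L * a) := by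
      have h5 : (1 - s) * (f x - f p) ≤ (1 - s) * (L * a) :=
        mul_le_mul_of_nonneg_left hfxp (by linarith)
      nlinarith [hcomb]
    have hsa2 : s * a ^ 2 = d / 2 * a := by
      rw [pow_two, ← mul_assoc, hsa]
    rw [hsa2] at hcomb2
    by_contra hcon
    push_neg at hcon
    nlinarith [hcomb2, mul_pos (show (0:ℝ) < K * d - 4 * L by linarith)
      (mul_pos (show (0:ℝ) < 1 - s by linarith) ha0)]

set_option maxHeartbeats 2000000 in
/-- Lower bound `(1 - 1/(Kτ)) (f x - f p) ≤ L dist x y` for a prox point. -/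
lemma prox_lower {f : X → ℝ} {K L τ : ℝ} (hK : 0 < K) (hL : 0 < L)
    (hτ : 1 / K < τ) (hconv : KConvex K f) (hlip : LipschitzL L f)
    {p : X} (hp : ∀ z, f p ≤ f z) {x y : X} (hy : IsProx f τ x y) :
    (1 - 1 / (K * τ)) * (f x - f p) ≤ L * dist x y := by
  have hτ0 : 0 < τ := lt_trans (by positivity) hτ
  have hKτ : 1 < K * τ := by
    rw [div_lt_iff₀ hK] at hτ; linarith [hτ]
  obtain ⟨γ, ⟨hγ0, hγ1, hγd⟩, hγf⟩ := hconv y p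
  set d := dist x y with hddef
  set r := dist y p with hrdef
  have key : 2 * τ * (f y - f p) + K * τ * r ^ 2 ≤ 2 * d * r := by
    by_contra hcon
    push_neg at hcon
    set ε := 2 * τ * (f y - f p) + K * τ * r ^ 2 - 2 * d * r with hε
    have hε0 : 0 < ε := by linarith
    set B := (K * τ + 1) * r ^ 2 with hB
    have hB0 : 0 ≤ B := by positivity
    clear_value ε B
    obtain ⟨t, ht0, ht1, htB⟩ : ∃ t : ℝ, 0 < t ∧ t ≤ 1 ∧ t * B < ε := by
      refine ⟨min 1 (ε / (B + 1)), lt_min one_pos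
        (div_pos hε0 (by linarith)), min_le_left _ _, ?_⟩
      have h9 : min 1 (ε / (B + 1)) ≤ ε / (B + 1) := min_le_right _ _
      have h10 : min 1 (ε / (B + 1)) * B ≤ ε / (B + 1) * B :=
        mul_le_mul_of_nonneg_right h9 hB0
      have h11 : ε / (B + 1) * B < ε := by
        rw [div_mul_eq_mul_div, div_lt_iff₀ (by linarith)]
        nlinarith
      linarith
    have htmem : t ∈ Icc (0:ℝ) 1 := ⟨ht0.le, ht1⟩
    have hdyz : dist y (γ t) = t * r := by
      have h := hγd 0 ⟨le_refl _, zero_le_one⟩ t htmem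
      rw [hγ0] at h
      rw [h, abs_of_nonpos (by linarith : (0:ℝ) - t ≤ 0), neg_sub, sub_zero]
    have hxz : dist x (γ t) ≤ d + t * r := by
      calc dist x (γ t) ≤ dist x y + dist y (γ t) := dist_triangle _ _ _
      _ = d + t * r := by rw [hdyz, ← hddef]
    have hxz2 : dist x (γ t) ^ 2 ≤ (d + t * r) ^ 2 :=
      pow_le_pow_left₀ dist_nonneg hxz 2
    have h1 := hy (γ t)
    rw [← hddef] at h1
    have h1' : (f y - f (γ t)) * (2 * τ) ≤ (d + t * r) ^ 2 - d ^ 2 := by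
      have hdiv : dist x (γ t) ^ 2 / (2 * τ) ≤ (d + t * r) ^ 2 / (2 * τ) :=
        div_le_div_of_nonneg_right hxz2 (by positivity)
      have h6 : f y - f (γ t) ≤ ((d + t * r) ^ 2 - d ^ 2) / (2 * τ) := by
        have heq : ((d + t * r) ^ 2 - d ^ 2) / (2 * τ) =
            (d + t * r) ^ 2 / (2 * τ) - d ^ 2 / (2 * τ) := by ring
        rw [heq]; linarith
      rw [← le_div_iff₀ (by positivity : (0:ℝ) < 2 * τ)]
      exact h6
    have h2 := hγf t htmem
    have h2' : (t * (f y - f p) + K / 2 * t * (1 - t) * r ^ 2) * (2 * τ) ≤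
        (d + t * r) ^ 2 - d ^ 2 := by
      have h7 : t * (f y - f p) + K / 2 * t * (1 - t) * r ^ 2 ≤ f y - f (γ t) := by
        nlinarith [h2]
      calc (t * (f y - f p) + K / 2 * t * (1 - t) * r ^ 2) * (2 * τ)
          ≤ (f y - f (γ t)) * (2 * τ) :=
            mul_le_mul_of_nonneg_right h7 (by positivity)
        _ ≤ (d + t * r) ^ 2 - d ^ 2 := h1'
    have h3 : t * ε ≤ t ^ 2 * B := by
      rw [hε, hB]; nlinarith [h2']
    have h4 : ε ≤ t * B := by
      have h8 : t * ε ≤ t * (t * B) := by nlinarith [h3]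
      exact le_of_mul_le_mul_left h8 ht0
    linarith
  have hfd : f x - f y ≤ L * d := by
    have h := (abs_le.mp (hlip x y)).2
    rw [← hddef] at h; linarith
  have hd2τL : d ≤ 2 * τ * L := prox_dist_le hL hτ0 hlip hy
  have hG : 2 * K * τ ^ 2 * (f y - f p) ≤ d ^ 2 := by
    nlinarith [mul_le_mul_of_nonneg_left key (by positivity : (0:ℝ) ≤ K * τ),
      sq_nonneg (K * τ * r - d)]
  have hG2 : K * τ * (f y - f p) ≤ L * d := by
    nlinarith [hG, mul_le_mul_of_nonneg_right hd2τL
      (dist_nonneg (x := x) (y := y)), hτ0]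
  have hrw : (1 - 1 / (K * τ)) * (f x - f p) =
      (K * τ - 1) * (f x - f p) / (K * τ) := by
    field_simp
  rw [hrw, div_le_iff₀ (by positivity : (0:ℝ) < K * τ)]
  nlinarith [hG2, hfd, hp y, hp x, mul_nonneg
    (show (0:ℝ) ≤ K * τ - 1 by linarith)
    (show (0:ℝ) ≤ f y - f p by linarith [hp y])]

/-- Near-geodesicity: `(x|p)_y ≤ 2δ` for a prox point. -/
lemma prox_gp_le {f : X → ℝ} {δ K τ : ℝ} (hδ : 0 ≤ δ) (hK : 0 < K) (hτ0 : 0 < τ)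
    (hX : IsDeltaHyp X δ) (hconv : KConvex K f)
    {p : X} (hp : ∀ z, f p ≤ f z) {x y : X} (hy : IsProx f τ x y) :
    gp y x p ≤ 2 * δ := by
  by_contra hcon
  push_neg at hcon
  have hgpe : gp y x p = (dist y x + dist y p - dist x p) / 2 := rfl
  have hβd : gp y x p ≤ dist x y := by
    rw [hgpe]
    linarith [dist_triangle y x p, dist_comm y x]
  have hβr : gp y x p ≤ dist y p := by
    rw [hgpe]
    linarith [dist_triangle y p x, dist_comm p x]
  have hβ0 : 0 < gp y x p := lt_of_le_of_lt (by linarith) hcon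
  have hr0 : 0 < dist y p := lt_of_lt_of_le hβ0 hβr
  obtain ⟨γ, ⟨hγ0, hγ1, hγd⟩, hγf⟩ := hconv y p
  set t := gp y x p / dist y p with ht
  have ht0 : 0 ≤ t := div_nonneg hβ0.le hr0.le
  have ht1 : t ≤ 1 := (div_le_one hr0).mpr hβr
  have htmem : t ∈ Icc (0:ℝ) 1 := ⟨ht0, ht1⟩
  have htr : t * dist y p = gp y x p := by
    rw [ht]; field_simp
  have hdyz : dist y (γ t) = gp y x p := by
    have h := hγd 0 ⟨le_refl _, zero_le_one⟩ t htmem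
    rw [hγ0] at h
    rw [h, abs_of_nonpos (by linarith : (0:ℝ) - t ≤ 0), neg_sub, sub_zero]
    exact htr
  have hdpz : dist p (γ t) = dist y p - gp y x p := by
    have h := hγd 1 ⟨zero_le_one, le_refl _⟩ t htmem
    rw [hγ1] at h
    rw [h, abs_of_nonneg (by linarith : (0:ℝ) ≤ 1 - t),
      show (1 - t) * dist y p = dist y p - t * dist y p from by ring, htr]
  have hgpz : gp y p (γ t) = gp y x p := by
    have he : gp y p (γ t) = (dist y p + dist y (γ t) - dist p (γ t)) / 2 := rfl
    rw [he, hdyz, hdpz]; ring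
  have hhyp := hX y x p (γ t)
  rw [hgpz, min_self] at hhyp
  have hxzle : dist x (γ t) ≤ dist x y - gp y x p + 2 * δ := by
    have he : gp y x (γ t) = (dist y x + dist y (γ t) - dist x (γ t)) / 2 := rfl
    rw [he, hdyz] at hhyp
    have hc : dist y x = dist x y := dist_comm y x
    linarith [hhyp]
  have hxz2 : dist x (γ t) ^ 2 ≤ (dist x y - gp y x p + 2 * δ) ^ 2 :=
    pow_le_pow_left₀ dist_nonneg hxzle 2
  have h1 := hy (γ t)
  have h2 := hγf t htmem
  have hfz : f (γ t) ≤ f y := by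
    nlinarith [h2, hp y, mul_nonneg ht0 (sub_nonneg.mpr (hp y)),
      mul_nonneg (mul_nonneg (mul_nonneg hK.le
        (show (0:ℝ) ≤ 1 - t by linarith)) ht0) (sq_nonneg (dist y p))]
  have hsq : dist x y ^ 2 ≤ (dist x y - gp y x p + 2 * δ) ^ 2 := by
    have hA : dist x (γ t) ^ 2 / (2 * τ) ≤
        (dist x y - gp y x p + 2 * δ) ^ 2 / (2 * τ) :=
      div_le_div_of_nonneg_right hxz2 (by positivity)
    have hB : dist x y ^ 2 / (2 * τ) ≤
        (dist x y - gp y x p + 2 * δ) ^ 2 / (2 * τ) := by linarith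
    rw [div_le_div_iff_of_pos_right (by positivity)] at hB
    exact hB
  nlinarith [hsq, hβd, hδ, hβ0, hcon]

end Aux

set_option maxHeartbeats 2000000 in
theorem contraction_case_one_strong {X : Type*} [MetricSpace X] [ProperSpace X]
    {δ K L τ : ℝ} (hδ : 0 ≤ δ) (hK : 0 < K) (hL : 0 < L) (hτ : 1 / K < τ)
    (hX : IsDeltaHyp X δ) (hgeo : GeodesicSpace X) (f : X → ℝ)
    (hconv : KConvex K f) (hlip : LipschitzL L f)
    (p : X) (hp : ∀ z : X, f p ≤ f z)
    (x₁ x₂ y₁ y₂ : X) (hy₁ : IsProx f τ x₁ y₁) (hy₂ : IsProx f τ x₂ y₂)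
    (hord : dist p y₁ ≤ dist p y₂) (hcase : dist p y₁ ≥ gp p x₁ x₂) :
    dist y₁ y₂ ≤ dist x₁ x₂ -
        (1 - 1 / (K * τ)) * (f x₁ + f x₂ - 2 * f p) / L +
      8 * Real.sqrt (2 * τ * L * δ) / Real.sqrt (K * τ + 1) + 12 * δ := by
  have hτ0 : 0 < τ := lt_trans (by positivity) hτ
  have hβ1 := prox_gp_le hδ hK hτ0 hX hconv hp hy₁
  have hβ2 := prox_gp_le hδ hK hτ0 hX hconv hp hy₂
  have c1 : dist y₁ x₁ = dist x₁ y₁ := dist_comm _ _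
  have c2 : dist y₂ x₂ = dist x₂ y₂ := dist_comm _ _
  have c3 : dist y₁ p = dist p y₁ := dist_comm _ _
  have c4 : dist y₂ p = dist p y₂ := dist_comm _ _
  have c5 : dist x₁ p = dist p x₁ := dist_comm _ _
  have c6 : dist x₂ p = dist p x₂ := dist_comm _ _
  simp only [gp] at hβ1 hβ2 hcase
  have hr1 : dist p y₁ + dist x₁ y₁ ≤ dist p x₁ + 4 * δ := by linarith
  have hr2 : dist p y₂ + dist x₂ y₂ ≤ dist p x₂ + 4 * δ := by linarith
  have hCg : gp p y₁ x₁ ≥ gp p x₁ x₂ - 2 * δ := by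
    simp only [gp]; linarith
  have hAg : gp p x₂ y₂ ≥ gp p x₁ x₂ - 2 * δ := by
    simp only [gp]; linarith
  have h6 := hX p x₁ x₂ y₂
  have hBg : gp p x₁ y₂ ≥ gp p x₁ x₂ - 3 * δ := by
    have hmin : gp p x₁ x₂ - 2 * δ ≤ min (gp p x₁ x₂) (gp p x₂ y₂) :=
      le_min (by linarith) hAg
    linarith [h6]
  have h5 := hX p y₁ x₁ y₂
  have hDg : gp p y₁ y₂ ≥ gp p x₁ x₂ - 4 * δ := by
    have hmin : gp p x₁ x₂ - 3 * δ ≤ min (gp p y₁ x₁) (gp p x₁ y₂) :=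
      le_min (by linarith [hCg]) hBg
    linarith [h5]
  have hI : dist y₁ y₂ ≤ dist x₁ x₂ - dist x₁ y₁ - dist x₂ y₂ + 16 * δ := by
    simp only [gp] at hDg
    linarith
  set E := 8 * Real.sqrt (2 * τ * L * δ) / Real.sqrt (K * τ + 1) with hE
  have hQ0 : (0:ℝ) < K * τ + 1 := by positivity
  have h2τLδ : (0:ℝ) ≤ 2 * τ * L * δ :=
    mul_nonneg (mul_nonneg (mul_nonneg two_pos.le hτ0.le) hL.le) hδ
  have hE0 : 0 ≤ E := by
    rw [hE]
    exact div_nonneg (mul_nonneg (by norm_num) (Real.sqrt_nonneg _)) (Real.sqrt_nonneg _)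
  have hE2 : E ^ 2 * (K * τ + 1) = 64 * (2 * τ * L * δ) := by
    rw [hE, div_pow, mul_pow, Real.sq_sqrt h2τLδ, Real.sq_sqrt hQ0.le,
      div_mul_cancel₀ _ (ne_of_gt hQ0)]
    norm_num
  have hF : (1 - 1 / (K * τ)) * (f x₁ + f x₂ - 2 * f p) / L ≤
      dist x₁ y₁ + dist x₂ y₂ := by
    rw [div_le_iff₀ hL]
    have e : (1 - 1 / (K * τ)) * (f x₁ + f x₂ - 2 * f p) =
        (1 - 1 / (K * τ)) * (f x₁ - f p) + (1 - 1 / (K * τ)) * (f x₂ - f p) := by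
      ring
    rw [e]
    linarith [prox_lower hK hL hτ hconv hlip hp hy₁,
      prox_lower hK hL hτ hconv hlip hp hy₂]
  by_cases hc4 : 4 * δ ≤ E
  · linarith [hI, hF]
  · push_neg at hc4
    have hδ0 : 0 < δ := by
      by_contra h
      push_neg at h
      linarith
    have h8 : 8 * (τ * L) < δ * (K * τ + 1) := by
      have hEE : E ^ 2 < 16 * δ ^ 2 := by nlinarith [hE0, hc4]
      nlinarith [hE2, mul_pos hδ0 hQ0, hδ0, hQ0]
    have hS : (dist x₁ y₁ + dist x₂ y₂) * (K * τ + 1) ≤ 12 * (τ * L) := by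
      have k1 := prox_Kdist hK hL hτ0 hconv hlip hp hy₁
      have k2 := prox_Kdist hK hL hτ0 hconv hlip hp hy₂
      have t1 := prox_dist_le hL hτ0 hlip hy₁
      have t2 := prox_dist_le hL hτ0 hlip hy₂
      nlinarith [mul_le_mul_of_nonneg_left k1 hτ0.le,
        mul_le_mul_of_nonneg_left k2 hτ0.le, t1, t2]
    have hSδ : dist x₁ y₁ + dist x₂ y₂ ≤ 2 * δ := by
      nlinarith [hS, h8, hQ0, hδ0]
    have htri : dist y₁ y₂ ≤ dist x₁ x₂ + dist x₁ y₁ + dist x₂ y₂ := by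
      calc dist y₁ y₂ ≤ dist y₁ x₂ + dist x₂ y₂ := dist_triangle _ _ _
        _ ≤ dist y₁ x₁ + dist x₁ x₂ + dist x₂ y₂ := by
            linarith [dist_triangle y₁ x₁ x₂]
        _ = dist x₁ x₂ + dist x₁ y₁ + dist x₂ y₂ := by rw [c1]; ring
    linarith [hF, hE0]
end

section
/- Let (X,d) be a 0-hyperbolic geodesic space and f : X → ℝ a convex continuous function attaining its minimum at p. For any x ∈ X, τ > 0, and y ∈ argmin_z { f(z) + d²(x,z)/(2τ) } with f(y) > f(p), the point y lies on a geodesic from x to p, i.e., d(x,y) + d(y,p) = d(x,p). -/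
open Set

theorem prox_on_geodesic_zero_hyp {X : Type*} [MetricSpace X] {τ : ℝ} (hτ : 0 < τ)
    (hX : IsDeltaHyp X 0) (hgeo : GeodesicSpace X) (f : X → ℝ)
    (hconv : KConvex 0 f) (hcont : Continuous f)
    (p : X) (hp : ∀ z : X, f p ≤ f z)
    (x y : X) (hy : IsProx f τ x y) (hfy : f p < f y) :
    dist x y + dist y p = dist x p := by
  by_contra hne
  set a := dist x y with ha
  set b := dist x p with hb
  set c := dist y p with hc
  have htri : b ≤ a + c := dist_triangle x y p
  have hlt : b < a + c := lt_of_le_of_ne htri (fun h => hne h.symm)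
  have hcpos : 0 < c := by
    rw [hc, dist_pos]
    intro h; rw [h] at hfy; exact lt_irrefl _ hfy
  set ε := (a + c - b) / 2 with hε
  have hεpos : 0 < ε := by simp only [hε]; linarith
  obtain ⟨γ, ⟨h0, h1, hd⟩, hcvx⟩ := hconv y p
  set t := min 1 (ε / c) with htdef
  have htpos : 0 < t := lt_min one_pos (div_pos hεpos hcpos)
  have ht1 : t ≤ 1 := min_le_left _ _
  have htmem : t ∈ Icc (0:ℝ) 1 := ⟨le_of_lt htpos, ht1⟩
  have hs : dist y (γ t) = t * c := by
    have h := hd 0 ⟨le_refl 0, zero_le_one⟩ t htmem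
    rw [h0] at h
    rw [h, zero_sub, abs_neg, abs_of_nonneg htpos.le]
  have hs2 : dist (γ t) p = (1 - t) * c := by
    have h := hd t htmem 1 ⟨zero_le_one, le_refl 1⟩
    rw [h1] at h
    rw [h, abs_of_nonpos (by linarith : t - 1 ≤ 0)]
    ring_nf
    rw [hc]
  have hsε : t * c ≤ ε := by
    have h := min_le_right 1 (ε / c)
    calc t * c ≤ (ε / c) * c := mul_le_mul_of_nonneg_right h hcpos.le
      _ = ε := div_mul_cancel₀ _ (ne_of_gt hcpos)
  have hfγ : f (γ t) ≤ (1 - t) * f y + t * f p := by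
    have h := hcvx t htmem
    simpa using h
  have hu : a < dist x (γ t) := by
    have hprox := hy (γ t)
    have h2τ : (0:ℝ) < 2 * τ := by linarith
    have hdiv : a ^ 2 / (2 * τ) < dist x (γ t) ^ 2 / (2 * τ) := by
      nlinarith [mul_pos htpos (sub_pos.mpr hfy)]
    have h2 : a ^ 2 < dist x (γ t) ^ 2 := by
      exact lt_of_not_ge fun hle => absurd hdiv
        (not_lt.mpr (div_le_div_of_nonneg_right hle h2τ.le))
    exact lt_of_pow_lt_pow_left₀ 2 dist_nonneg h2
  have hhyp := hX x y (γ t) p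
  simp only [gp, sub_zero, ge_iff_le] at hhyp
  have htc : 0 < t * c := mul_pos htpos hcpos
  rcases le_total ((dist x y + dist x (γ t) - dist y (γ t)) / 2)
      ((dist x (γ t) + dist x p - dist (γ t) p) / 2) with hmin | hmin
  · rw [min_eq_left hmin] at hhyp
    rw [hs] at hhyp
    simp only [hε] at hsε
    linarith
  · rw [min_eq_right hmin] at hhyp
    rw [hs2] at hhyp
    nlinarith
end

section
/- In a δ-hyperbolic geodesic space, let γ be a geodesic from y to x, η a geodesic from y to p, and suppose f is K-convex along η, L-Lipschitz, with f(p) = min f, and y minimizes z ↦ f(z) + d²(x,z)/(2τ). Then with t̄ := (x|p)_y/d(x,y) (assuming x ≠ y), the quadratic inequality (Kτ+1)t̄² − (2τ(f(y)−f(p))/(d(x,y)d(p,y)) + Kτ·d(p,y)/d(x,y) + 2)·t̄ + 8τLδ/d²(x,y) ≥ 0 holds. -/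
open Set

theorem quadratic_inequality_for_tbar {X : Type*} [MetricSpace X]
    {δ K L τ : ℝ} (hδ : 0 ≤ δ) (hK : 0 ≤ K) (hL : 0 < L) (hτ : 0 < τ)
    (hX : IsDeltaHyp X δ) (hgeo : GeodesicSpace X) (f : X → ℝ)
    (hconv : KConvex K f) (hlip : LipschitzL L f)
    (p : X) (hp : ∀ z : X, f p ≤ f z)
    (x y : X) (hy : IsProx f τ x y) (hxy : x ≠ y) :
    (K * τ + 1) * (gp y x p / dist x y) ^ 2 -
        (2 * τ * (f y - f p) / (dist x y * dist p y) +
          K * τ * dist p y / dist x y + 2) * (gp y x p / dist x y) +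
      8 * τ * L * δ / dist x y ^ 2 ≥ 0 := by
  have hD : (0:ℝ) < dist x y := dist_pos.mpr hxy
  set D := dist x y with hDdef
  set R := dist p y with hRdef
  set g := gp y x p with hgdef
  have hyx : dist y x = D := dist_comm y x
  have hyp' : dist y p = R := dist_comm y p
  have hg0 : 0 ≤ g := by
    have := dist_triangle x y p
    simp only [hgdef, gp]
    have h1 : dist y x = dist x y := dist_comm y x
    linarith [dist_triangle x y p]
  have hgD : g ≤ D := by
    simp only [hgdef, gp]
    rw [hDdef]
    have := dist_triangle y x p
    have h1 : dist y x = dist x y := dist_comm y x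
    have h2 : dist p x = dist x p := dist_comm p x
    linarith
  have hgR : g ≤ R := by
    simp only [hgdef, gp]
    rw [hRdef]
    have := dist_triangle y p x
    have h2 : dist p x = dist x p := dist_comm p x
    have h1 : dist y p = dist p y := dist_comm y p
    linarith
  rcases eq_or_lt_of_le dist_nonneg (b := R) with hR0 | hR
  · -- p = y, so g = 0
    have hpy : p = y := by
      have : dist p y = 0 := hR0.symm
      exact dist_eq_zero.mp this
    have hgz : g = 0 := by
      simp only [hgdef, gp, hpy]
      simp [dist_comm x y]
    rw [hgz]
    have : (0:ℝ) ≤ 8 * τ * L * δ / D ^ 2 := by positivity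
    simp only [zero_div, mul_zero, ne_eq, OfNat.ofNat_ne_zero, not_false_eq_true,
      zero_pow, mul_zero, sub_zero, zero_sub, neg_zero, zero_add]
    linarith
  · -- Main case: R > 0
    obtain ⟨γ, hγ0, hγ1, hγd⟩ := hgeo y x
    obtain ⟨η, ⟨hη0, hη1, hηd⟩, hηc⟩ := hconv y p
    set t := g / D with htdef
    set s := g / R with hsdef
    have ht0 : 0 ≤ t := div_nonneg hg0 hD.le
    have ht1 : t ≤ 1 := (div_le_one hD).mpr hgD
    have hs0 : 0 ≤ s := div_nonneg hg0 hR.le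
    have hs1 : s ≤ 1 := (div_le_one hR).mpr hgR
    have htI : t ∈ Icc (0:ℝ) 1 := ⟨ht0, ht1⟩
    have hsI : s ∈ Icc (0:ℝ) 1 := ⟨hs0, hs1⟩
    have h0I : (0:ℝ) ∈ Icc (0:ℝ) 1 := ⟨le_refl 0, zero_le_one⟩
    have h1I : (1:ℝ) ∈ Icc (0:ℝ) 1 := ⟨zero_le_one, le_refl 1⟩
    set w := γ t with hwdef
    set z := η s with hzdef
    have hyw : dist y w = g := by
      have h := hγd 0 h0I t htI
      rw [hγ0, hyx] at h
      have habs : |(0:ℝ) - t| = t := by rw [abs_of_nonpos (by linarith)]; ring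
      rw [hwdef, h, habs, htdef, div_mul_cancel₀ _ hD.ne']
    have hwx : dist w x = D - g := by
      have h := hγd t htI 1 h1I
      rw [hγ1, hyx] at h
      have habs : |t - 1| = 1 - t := by rw [abs_of_nonpos (by linarith)]; ring
      rw [hwdef, h, habs, htdef]
      field_simp
    have hyz : dist y z = g := by
      have h := hηd 0 h0I s hsI
      rw [hη0, hyp'] at h
      have habs : |(0:ℝ) - s| = s := by rw [abs_of_nonpos (by linarith)]; ring
      rw [hzdef, h, habs, hsdef, div_mul_cancel₀ _ hR.ne']
    have hzp : dist z p = R - g := by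
      have h := hηd s hsI 1 h1I
      rw [hη1, hyp'] at h
      have habs : |s - 1| = 1 - s := by rw [abs_of_nonpos (by linarith)]; ring
      rw [hzdef, h, habs, hsdef]
      field_simp
    -- Gromov products
    have hgpwx : gp y w x = g := by
      simp only [gp]
      rw [hyw, hyx, hwx]; ring
    have hgpzp : gp y z p = g := by
      simp only [gp]
      rw [hyz, hyp', hzp]; ring
    have hgppz : gp y p z = g := by
      simp only [gp]
      rw [hyp', hyz, dist_comm p z, hzp]; ring
    -- tripod: dist w z ≤ 4δ
    have h1 : gp y x z ≥ min (gp y x p) (gp y p z) - δ := hX y x p z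
    have h2 : gp y w z ≥ min (gp y w x) (gp y x z) - δ := hX y w x z
    rw [← hgdef, hgppz, min_self] at h1
    have h2' : gp y w z ≥ g - 2 * δ := by
      rw [hgpwx] at h2
      rcases min_le_iff.mp (le_refl (min g (gp y x z))) with _ | _
      · calc gp y w z ≥ min g (gp y x z) - δ := h2
          _ ≥ min g (g - δ) - δ := by
              apply sub_le_sub_right
              exact le_min (min_le_left _ _) (le_trans (min_le_right _ _) h1)
          _ ≥ g - 2 * δ := by
              rcases min_le_iff.mp (le_refl (min g (g - δ))) with _ | _ <;>
                [skip; skip] <;>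
              · have := min_le_left g (g - δ)
                have := min_le_right g (g - δ)
                have h3 : min g (g - δ) = g - δ := min_eq_right (by linarith)
                rw [h3]; linarith
      · calc gp y w z ≥ min g (gp y x z) - δ := h2
          _ ≥ min g (g - δ) - δ := by
              apply sub_le_sub_right
              exact le_min (min_le_left _ _) (le_trans (min_le_right _ _) h1)
          _ ≥ g - 2 * δ := by
              have h3 : min g (g - δ) = g - δ := min_eq_right (by linarith)
              rw [h3]; linarith
    have hwz : dist w z ≤ 4 * δ := by
      have hgpwz : gp y w z = (2 * g - dist w z) / 2 := by
        simp only [gp, hyw, hyz]; ring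
      rw [hgpwz] at h2'
      linarith
    -- Lipschitz
    have hBfw : f w ≤ f z + 4 * L * δ := by
      have := hlip w z
      have h4 : f w - f z ≤ L * dist w z := le_trans (le_abs_self _) this
      have h5 : L * dist w z ≤ L * (4 * δ) := by
        exact mul_le_mul_of_nonneg_left hwz hL.le
      linarith
    -- Convexity
    have hCfz : f z ≤ (1 - s) * f y + s * f p - K / 2 * (1 - s) * s * R ^ 2 := by
      have := hηc s hsI
      rw [hyp'] at this
      exact this
    -- Prox
    have hAfy : f y + D ^ 2 / (2 * τ) ≤ f w + (D - g) ^ 2 / (2 * τ) := by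
      have := hy w
      rw [dist_comm x w, hwx] at this
      exact this
    -- Combine
    have comb : f y + D ^ 2 / (2 * τ) ≤
        (1 - g / R) * f y + (g / R) * f p - K / 2 * (1 - g / R) * (g / R) * R ^ 2
        + 4 * L * δ + (D - g) ^ 2 / (2 * τ) := by
      rw [← hsdef]; linarith
    have key : 2 * τ * g * (f y - f p) + K * τ * g * (R - g) * R
        + (2 * D * g - g ^ 2) * R ≤ 8 * τ * L * δ * R := by
      have h := mul_le_mul_of_nonneg_left comb
        (by positivity : (0:ℝ) ≤ 2 * τ * R)
      have e1 : 2 * τ * R * (f y + D ^ 2 / (2 * τ)) = 2 * τ * R * f y + R * D ^ 2 := by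
        field_simp
      have e2 : 2 * τ * R * ((1 - g / R) * f y + (g / R) * f p
            - K / 2 * (1 - g / R) * (g / R) * R ^ 2 + 4 * L * δ + (D - g) ^ 2 / (2 * τ))
          = 2 * τ * (R - g) * f y + 2 * τ * g * f p - K * τ * (R - g) * g * R
            + 8 * τ * L * δ * R + R * (D - g) ^ 2 := by
        field_simp
        ring
      rw [e1, e2] at h
      linarith [h]
    rw [ge_iff_le, ← sub_nonneg, sub_zero]
    rw [← mul_nonneg_iff_of_pos_right (by positivity : (0:ℝ) < D ^ 2 * R)]
    have expand : ((K * τ + 1) * (g / D) ^ 2 -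
        (2 * τ * (f y - f p) / (D * R) + K * τ * R / D + 2) * (g / D) +
        8 * τ * L * δ / D ^ 2) * (D ^ 2 * R)
        = (K * τ + 1) * g ^ 2 * R - (2 * τ * (f y - f p) * g
          + K * τ * R ^ 2 * g + 2 * D * R * g) + 8 * τ * L * δ * R := by
      field_simp
    rw [expand]
    linarith [key]
end
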